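/- Let Γ be an icc group and let Θ₁, Θ₂ ≤ Γ be subgroups such that the commutator subgroup ⁅Θ₁, Θ₂⁆ is finite and the subgroup Θ generated by Θ₁ ∪ Θ₂ has finite index in Γ. Then every element of Θ₁ commutes with every element of Θ₂, and Θ₁ ∩ Θ₂ = {1}. -/

import Mathlib

/-! `Θ = Θ₁ ⊔ Θ₂` normalizes the finite group `⁅Θ₁, Θ₂⁆`, so each of its elements has finitely
many `Θ`-conjugates and hence, `Θ` having finite index, finitely many conjugates in `Γ`; being icc,
`Γ` forces it to be trivial. Then `Θ₁` and `Θ₂` commute, so an element of `Θ₁ ∩ Θ₂` is centralized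
by `Θ` and is trivial for the same reason. -/

open Subgroup

def IsICC (Γ : Type*) [Group Γ] : Prop :=
  ∀ g : Γ, g ≠ 1 → (conjugatesOf g).Infinite

lemma setOf_exists_conj_eq_conjugatesOf {Γ : Type*} [Group Γ] (g : Γ) :
    {x : Γ | ∃ h : Γ, x = h * g * h⁻¹} = conjugatesOf g := by
  ext x
  simp [conjugatesOf, isConj_iff, eq_comm]

/-- Every conjugate `h * g * h⁻¹` equals `r * (k * g * k⁻¹) * r⁻¹` with `r` the chosen
representative of `h Θ` and `k = r⁻¹ * h ∈ Θ`. -/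
lemma conjugatesOf_finite_of_conj_mem {Γ : Type*} [Group Γ] (Θ : Subgroup Γ) [Θ.FiniteIndex]
    {N : Set Γ} (hN : N.Finite) {g : Γ} (hg : ∀ k ∈ Θ, k * g * k⁻¹ ∈ N) :
    (conjugatesOf g).Finite := by
  refine ((Set.finite_range fun q : Γ ⧸ Θ => q.out).image2
    (fun r n => r * n * r⁻¹) hN).subset ?_
  intro x hx
  obtain ⟨h, rfl⟩ := isConj_iff.mp hx
  set r := (QuotientGroup.mk h : Γ ⧸ Θ).out
  have hk : r⁻¹ * h ∈ Θ := QuotientGroup.eq.mp (QuotientGroup.out_eq' _)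
  exact ⟨r, ⟨_, rfl⟩, _, hg _ hk, by group⟩

namespace IsICC

variable {Γ : Type*} [Group Γ] {Θ : Subgroup Γ} [Θ.FiniteIndex]

lemma eq_one_of_conj_mem (hΓ : IsICC Γ) {N : Set Γ} (hN : N.Finite) {g : Γ}
    (hg : ∀ k ∈ Θ, k * g * k⁻¹ ∈ N) : g = 1 :=
  not_not.mp fun hg1 => hΓ g hg1 (conjugatesOf_finite_of_conj_mem Θ hN hg)

lemma eq_bot_of_le_normalizer (hΓ : IsICC Γ) {K : Subgroup Γ} (hK : (K : Set Γ).Finite)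
    (hΘ : Θ ≤ normalizer (K : Set Γ)) : K = ⊥ :=
  (eq_bot_iff_forall K).mpr fun _ hg =>
    hΓ.eq_one_of_conj_mem hK fun _ hk => (mem_normalizer_iff.mp (hΘ hk) _).mp hg

lemma eq_one_of_le_centralizer (hΓ : IsICC Γ) {g : Γ} (hΘ : Θ ≤ centralizer {g}) : g = 1 :=
  hΓ.eq_one_of_conj_mem (Set.finite_singleton g) fun k hk => by
    rw [mem_centralizer_singleton_iff.mp (hΘ hk), mul_inv_cancel_right]
    exact Set.mem_singleton g

end IsICC

/-- Let `Γ` be icc and `Θ₁, Θ₂ ≤ Γ` with finite commutator subgroup `⁅Θ₁, Θ₂⁆`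
and with `Θ = ⟨Θ₁ ∪ Θ₂⟩` of finite index in `Γ`. Then the elements of `Θ₁`
commute with those of `Θ₂`, and `Θ₁ ∩ Θ₂ = {1}`. -/
theorem stmt8 (Γ : Type*) [Group Γ]
    (hicc : ∀ g : Γ, g ≠ 1 → {x : Γ | ∃ h : Γ, x = h * g * h⁻¹}.Infinite)
    (Θ₁ Θ₂ : Subgroup Γ)
    (hcomm : ((⁅Θ₁, Θ₂⁆ : Subgroup Γ) : Set Γ).Finite)
    (hindex : (Θ₁ ⊔ Θ₂).index ≠ 0) :
    (∀ a ∈ Θ₁, ∀ b ∈ Θ₂, a * b = b * a) ∧ Θ₁ ⊓ Θ₂ = ⊥ := by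
  have hΓ : IsICC Γ := fun g hg => setOf_exists_conj_eq_conjugatesOf g ▸ hicc g hg
  have : (Θ₁ ⊔ Θ₂).FiniteIndex := ⟨hindex⟩
  have hbot : ⁅Θ₁, Θ₂⁆ = ⊥ := hΓ.eq_bot_of_le_normalizer hcomm <|
    sup_le (normalizer_commutator_ge_left Θ₁ Θ₂) (normalizer_commutator_ge_right Θ₁ Θ₂)
  have h₁₂ : Θ₁ ≤ centralizer Θ₂ := commutator_eq_bot_iff_le_centralizer.mp hbot
  have h₂₁ : Θ₂ ≤ centralizer Θ₁ := le_centralizer_iff.mp h₁₂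
  refine ⟨fun a ha b hb => (mem_centralizer_iff.mp (h₁₂ ha) b hb).symm, ?_⟩
  refine (eq_bot_iff_forall _).mpr fun a ⟨ha₁, ha₂⟩ =>
    hΓ.eq_one_of_le_centralizer (Θ := Θ₁ ⊔ Θ₂) ?_
  exact sup_le (h₁₂.trans (centralizer_le (Set.singleton_subset_iff.mpr ha₂)))
    (h₂₁.trans (centralizer_le (Set.singleton_subset_iff.mpr ha₁)))
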